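/- arXiv:math/0404259 — 7 statements merged into one kernel-verified Lean document; each statement's English description precedes it below -/
import Mathlib

section
/- Every free abelian group is transitive: if G is a free abelian group and x, y are pure elements of G (nonzero elements g such that g = n·h implies n = ±1 for g, h in G, n an integer), then there exists an automorphism φ of G with φ(x) = y. -/
/-!
The coordinates of a pure element `x` of a free abelian group are coprime, so some functional
`f` has `f x = 1`, and then `G ≃ ℤ × ker f` with `x ↦ (1, 0)`. In finite rank the kernels of two
such functionals are free of the same rank, hence isomorphic, and this gives an automorphism
moving `x` to `y`. In general, `x` and `y` lie in the span of finitely many basis vectors; an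
automorphism of that factor, extended by the identity on the remaining basis vectors, does it.
-/

def IsPureElt {G : Type*} [AddCommGroup G] (x : G) : Prop :=
  x ≠ 0 ∧ ∀ (n : ℤ) (h : G), x = n • h → n = 1 ∨ n = -1

open Module

theorem IsPureElt.of_map {A B : Type*} [AddCommGroup A] [AddCommGroup B] (f : A →+ B) {a : A}
    (ha : IsPureElt (f a)) : IsPureElt a :=
  ⟨fun h0 => ha.1 (by simp [h0]), fun n h hn => ha.2 n (f h) (by rw [hn, map_zsmul])⟩

theorem Module.Basis.exists_eq_smul_of_forall_dvd_repr {ι M : Type*} [AddCommGroup M]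
    (b : Basis ι ℤ M) {d : ℤ} {x : M} (hd : ∀ i, d ∣ b.repr x i) : ∃ h, x = d • h := by
  refine ⟨b.repr.symm ((b.repr x).mapRange (· / d) (Int.zero_ediv d)), ?_⟩
  rw [← map_zsmul, eq_comm, LinearEquiv.symm_apply_eq]
  ext i
  simp [Int.mul_ediv_cancel' (hd i)]

theorem IsPureElt.exists_linearMap_eq_one {G : Type*} [AddCommGroup G] [Module.Free ℤ G]
    {x : G} (hx : IsPureElt x) : ∃ f : G →ₗ[ℤ] ℤ, f x = 1 := by
  -- The values `f x` form an ideal `(d)`; `d` divides every coordinate of `x`, so purity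
  -- forces `d = ±1`.
  let I : Ideal ℤ := LinearMap.range (Dual.eval ℤ G x)
  have hdvd (f : G →ₗ[ℤ] ℤ) : Submodule.IsPrincipal.generator I ∣ f x :=
    (Submodule.IsPrincipal.mem_iff_generator_dvd I).1 ⟨f, rfl⟩
  obtain ⟨h, hxh⟩ := (Free.chooseBasis ℤ G).exists_eq_smul_of_forall_dvd_repr
    fun i => hdvd ((Free.chooseBasis ℤ G).coord i)
  have hunit : IsUnit (Submodule.IsPrincipal.generator I) := by
    rcases hx.2 _ h hxh with h1 | h1 <;> simp [h1]
  obtain ⟨f, hf⟩ : (1 : ℤ) ∈ I := (Submodule.IsPrincipal.mem_iff_generator_dvd I).2 hunit.dvd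
  exact ⟨f, hf⟩

section
variable {R M : Type*} [CommRing R] [AddCommGroup M] [Module R M]

noncomputable def LinearMap.equivProdKerOfApplyEqOne (f : M →ₗ[R] R) {x : M} (hfx : f x = 1) :
    M ≃ₗ[R] R × LinearMap.ker f :=
  LinearEquiv.ofLinearMap
    (f.prod ((LinearMap.id - f.smulRight x).codRestrict (LinearMap.ker f)
      fun z => by simp [hfx]))
    ((LinearMap.toSpanSingleton R M x).coprod (LinearMap.ker f).subtype)
    (by ext <;> simp [hfx])
    (by ext; simp)

@[simp]
theorem LinearMap.equivProdKerOfApplyEqOne_apply_self (f : M →ₗ[R] R) {x : M} (hfx : f x = 1) :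
    f.equivProdKerOfApplyEqOne hfx x = (1, 0) := by
  ext
  · simpa [equivProdKerOfApplyEqOne]
  · show x - f x • x = 0
    simp [hfx]

end

theorem IsPureElt.exists_linearEquiv_apply_eq {G : Type*} [AddCommGroup G] [Module.Free ℤ G]
    [Module.Finite ℤ G] {x y : G} (hx : IsPureElt x) (hy : IsPureElt y) :
    ∃ φ : G ≃ₗ[ℤ] G, φ x = y := by
  obtain ⟨f, hf⟩ := hx.exists_linearMap_eq_one
  obtain ⟨g, hg⟩ := hy.exists_linearMap_eq_one
  let ef := f.equivProdKerOfApplyEqOne hf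
  let eg := g.equivProdKerOfApplyEqOne hg
  have hrank : finrank ℤ (LinearMap.ker f) = finrank ℤ (LinearMap.ker g) := by
    simpa [finrank_prod] using ef.finrank_eq.symm.trans eg.finrank_eq
  obtain ⟨e⟩ := FiniteDimensional.nonempty_linearEquiv_of_finrank_eq hrank
  exact ⟨ef ≪≫ₗ (LinearEquiv.refl ℤ ℤ).prodCongr e ≪≫ₗ eg.symm,
    by simp [ef, eg, LinearEquiv.symm_apply_eq]⟩

section
variable {ι R M : Type*} [Semiring R] [AddCommMonoid M] [Module R M]

noncomputable def Module.Basis.equivFinsuppProdCompl (b : Basis ι R M) (S : Set ι)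
    [DecidablePred (· ∈ S)] : M ≃ₗ[R] (S →₀ R) × (↥Sᶜ →₀ R) :=
  b.repr ≪≫ₗ Finsupp.domLCongr (Equiv.sumCompl (· ∈ S)).symm ≪≫ₗ
    Finsupp.sumFinsuppLEquivProdFinsupp R

theorem Module.Basis.snd_equivFinsuppProdCompl_eq_zero (b : Basis ι R M) {S : Set ι}
    [DecidablePred (· ∈ S)] {z : M} (hz : ↑(b.repr z).support ⊆ S) :
    (b.equivFinsuppProdCompl S z).2 = 0 := by
  ext ⟨i, hi⟩
  simpa [equivFinsuppProdCompl] using Finsupp.notMem_support_iff.mp fun h => hi (hz h)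

end

/-- Every free abelian group is transitive: any pure element can be mapped to any
other pure element by an automorphism. -/
theorem free_abelian_transitive {G : Type*} [AddCommGroup G] [Module.Free ℤ G]
    (x y : G) (hx : IsPureElt x) (hy : IsPureElt y) :
    ∃ φ : G ≃+ G, φ x = y := by
  classical
  let b := Free.chooseBasis ℤ G
  let S : Set (Free.ChooseBasisIndex ℤ G) := ↑((b.repr x).support ∪ (b.repr y).support)
  let E := b.equivFinsuppProdCompl S
  let j : (S →₀ ℤ) →+ G := E.symm.toAddMonoidHom.comp (AddMonoidHom.inl _ _)
  have hj {z : G} (hz : ↑(b.repr z).support ⊆ S) : j (E z).1 = z := by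
    change E.symm _ = z
    rw [LinearEquiv.symm_apply_eq]
    exact Prod.ext rfl (b.snd_equivFinsuppProdCompl_eq_zero hz).symm
  have hjx : j (E x).1 = x := hj (by simp [S])
  have hjy : j (E y).1 = y := hj (by simp [S])
  obtain ⟨ψ, hψ⟩ := (IsPureElt.of_map j (hjx ▸ hx)).exists_linearEquiv_apply_eq
    (IsPureElt.of_map j (hjy ▸ hy))
  refine ⟨(E ≪≫ₗ ψ.prodCongr (LinearEquiv.refl ℤ _) ≪≫ₗ E.symm).toAddEquiv, ?_⟩
  rw [← hjx, ← hjy, ← hψ]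
  simp [j]
end

section
/- A transitive torsion-free abelian group is cyclic over its endomorphism ring: if G is a torsion-free abelian group of type 0 such that for any two pure elements x, y there is an automorphism sending x to y, then G is a cyclic module over End(G), i.e., there exists g ∈ G with G = g·End(G). -/
/-- A transitive torsion-free abelian group of type 0 is cyclic over its
endomorphism ring: some `g` satisfies `G = g · End(G)`. -/
theorem transitive_cyclic_over_End {G : Type*} [AddCommGroup G]
    (hG : ∃ g : G, g ≠ 0)
    (htf : ∀ (n : ℤ) (g : G), n • g = 0 → n = 0 ∨ g = 0)
    (htype0 : ∀ g : G, ∃ (n : ℤ) (p : G), IsPureElt p ∧ g = n • p)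
    (htrans : ∀ x y : G, IsPureElt x → IsPureElt y → ∃ φ : G ≃+ G, φ x = y) :
    ∃ g : G, ∀ h : G, ∃ φ : G →+ G, φ g = h := by
  obtain ⟨g0, hg0⟩ := hG
  obtain ⟨n0, g, hgpure, _⟩ := htype0 g0
  refine ⟨g, fun h => ?_⟩
  obtain ⟨n, p, hppure, hp⟩ := htype0 h
  obtain ⟨φ, hφ⟩ := htrans g p hgpure hppure
  exact ⟨n • (φ : G →+ G), by simp [hφ, hp]⟩
end

section
/- Let G be an abelian group and φ, ψ partial automorphisms of G (isomorphisms between subgroups of G) such that the quotients G/Dom(φ), G/Im(φ), G/Dom(ψ), G/Im(ψ) are all ℵ₁-free abelian groups. Then the composition φψ, with domain (Im(φ) ∩ Dom(ψ))·φ⁻¹, also has G/Dom(φψ) and G/Im(φψ) ℵ₁-free. -/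
/-- An abelian group is ℵ₁-free if every countable subgroup is free. -/
def Aleph1Free (G : Type*) [AddCommGroup G] : Prop :=
  ∀ H : AddSubgroup G, Countable H → Module.Free ℤ H

/-- A countable group embedding into an ℵ₁-free group is free. -/
theorem free_of_inj {A B : Type*} [AddCommGroup A] [AddCommGroup B] [Countable A]
    (f : A →+ B) (hf : Function.Injective f) (hB : Aleph1Free B) :
    Module.Free ℤ A := by
  have hc : Countable f.range := f.rangeRestrict_surjective.countable
  haveI := hB f.range hc
  exact Module.Free.of_equiv (AddMonoidHom.ofInjective hf).symm.toIntLinearEquiv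

theorem aleph1Free_of_injective {A B : Type*} [AddCommGroup A] [AddCommGroup B]
    (f : A →+ B) (hf : Function.Injective f) (hB : Aleph1Free B) : Aleph1Free A := by
  intro H hH
  exact free_of_inj (f.comp H.subtype) (hf.comp H.subtype_injective) hB

/-- Extension of a free abelian group by a free abelian group is free. -/
theorem free_of_free_quotient {H : Type*} [AddCommGroup H] (K : AddSubgroup H)
    (hK : Module.Free ℤ K) (hQ : Module.Free ℤ (H ⧸ K)) : Module.Free ℤ H := by
  haveI := hK; haveI := hQ
  haveI : Module.Projective ℤ (H ⧸ K) := Module.Projective.of_free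
  set π : H →ₗ[ℤ] H ⧸ K := (QuotientAddGroup.mk' K).toIntLinearMap with hπdef
  have hπ : Function.Surjective π := QuotientAddGroup.mk'_surjective K
  obtain ⟨s, hs⟩ := π.exists_rightInverse_of_surjective (LinearMap.range_eq_top.2 hπ)
  have hs' : ∀ q, π (s q) = q := fun q => congrArg (fun g => g q) (congrArg DFunLike.coe hs)
  have hmem : ∀ x : H, x - s (π x) ∈ K := by
    intro x
    have h0 : π (x - s (π x)) = 0 := by simp [map_sub, hs' (π x)]
    exact (QuotientAddGroup.eq_zero_iff _).mp h0
  let f : H →ₗ[ℤ] K :=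
    { toFun := fun x => ⟨x - s (π x), hmem x⟩
      map_add' := by intro x y; ext; simp; abel
      map_smul' := by intro c x; ext; simp [smul_sub] }
  have hπK : ∀ k : K, π (k : H) = 0 := fun k => (QuotientAddGroup.eq_zero_iff _).mpr k.2
  have e : (K × (H ⧸ K)) ≃ₗ[ℤ] H :=
    LinearEquiv.ofLinear ((K.subtype.toIntLinearMap).coprod s) (f.prod π)
      (by
        apply LinearMap.ext; intro x
        simp [f, sub_add_cancel])
      (by
        apply LinearMap.ext; rintro ⟨k, q⟩
        have h1 : π (k : H) = 0 := hπK k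
        apply Prod.ext
        · ext; simp [f, h1, hs', add_sub_cancel_right]
        · simp [f, h1, hs'])
  exact Module.Free.of_equiv e

/-- If `N ≤ M` with `N` and `M ⧸ N` ℵ₁-free, then `M` is ℵ₁-free. -/
theorem aleph1Free_ext {M : Type*} [AddCommGroup M] (N : AddSubgroup M)
    (hN : Aleph1Free N) (hQ : Aleph1Free (M ⧸ N)) : Aleph1Free M := by
  intro H hH
  set g : H →+ M ⧸ N := (QuotientAddGroup.mk' N).comp H.subtype with hg
  -- the kernel of g embeds into N
  have hkermem : ∀ x : g.ker, (x : H) ∈ N.comap H.subtype := by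
    intro x
    have hx' : (((x : H) : M) : M ⧸ N) = 0 := by
      simpa [g, QuotientAddGroup.mk'_apply] using AddMonoidHom.mem_ker.mp x.2
    exact (QuotientAddGroup.eq_zero_iff ((x : H) : M)).mp hx' 
  let j : g.ker →+ N :=
    AddMonoidHom.codRestrict (H.subtype.comp g.ker.subtype) _ hkermem
  have hjinj : Function.Injective j := by
    intro a b hab
    have h1 := Subtype.ext_iff.mp hab
    simp only [j, AddMonoidHom.codRestrict_apply, AddMonoidHom.coe_comp,
      Function.comp_apply] at h1
    exact Subtype.ext (Subtype.ext h1)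
  have hker : Module.Free ℤ g.ker := free_of_inj j hjinj hN
  have hcr : Countable g.range := g.rangeRestrict_surjective.countable
  have hq : Module.Free ℤ (H ⧸ g.ker) := by
    haveI := hQ g.range hcr
    exact Module.Free.of_equiv
      (QuotientAddGroup.quotientKerEquivRange g).symm.toIntLinearEquiv
  exact free_of_free_quotient g.ker hker hq

/-- Key step: if `G ⧸ Im ι` and `D ⧸ S` are ℵ₁-free, so is `G ⧸ ι(S)`. -/
theorem step_aleph1Free {G D : Type*} [AddCommGroup G] [AddCommGroup D]
    (ι : D →+ G) (hι : Function.Injective ι) (S : AddSubgroup D)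
    (h1 : Aleph1Free (G ⧸ ι.range)) (h2 : Aleph1Free (D ⧸ S)) :
    Aleph1Free (G ⧸ S.map ι) := by
  apply aleph1Free_ext (ι.range.map (QuotientAddGroup.mk' (S.map ι)))
  · set g : D →+ (G ⧸ S.map ι) := (QuotientAddGroup.mk' (S.map ι)).comp ι with hg
    have hrange : g.range = ι.range.map (QuotientAddGroup.mk' (S.map ι)) :=
      AddMonoidHom.range_comp _ _
    have hcm : (S.map ι).comap ι = S := AddSubgroup.comap_map_eq_self_of_injective hι S
    have hker : g.ker = S := by
      ext x
      have h0 : x ∈ g.ker ↔ ι x ∈ S.map ι := by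
        rw [AddMonoidHom.mem_ker]
        simp only [g, AddMonoidHom.coe_comp, Function.comp_apply,
          QuotientAddGroup.mk'_apply]
        exact QuotientAddGroup.eq_zero_iff (ι x)
      rw [h0, ← AddSubgroup.mem_comap, hcm]
    rw [← hrange]
    have h2' : Aleph1Free (D ⧸ g.ker) := by rw [hker]; exact h2
    exact aleph1Free_of_injective
      (QuotientAddGroup.quotientKerEquivRange g).symm.toAddMonoidHom
      (AddEquiv.injective _) h2'
  · have hle : S.map ι ≤ ι.range := AddSubgroup.map_le_range ι S
    exact aleph1Free_of_injective
      (QuotientAddGroup.quotientQuotientEquivQuotient (S.map ι) ι.range hle).toAddMonoidHom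
      (AddEquiv.injective _) h1

theorem ker_mk'_comp {A B : Type*} [AddCommGroup A] [AddCommGroup B]
    (T : AddSubgroup B) (f : A →+ B) :
    ((QuotientAddGroup.mk' T).comp f).ker = T.comap f := by
  ext x
  rw [AddMonoidHom.mem_ker]
  simp only [AddMonoidHom.coe_comp, Function.comp_apply, QuotientAddGroup.mk'_apply]
  exact QuotientAddGroup.eq_zero_iff (f x)

/-- If `φ, ψ` are partial automorphisms of `G` whose domains and images have
ℵ₁-free quotients in `G`, then the domain and image of the composition `φψ`
also have ℵ₁-free quotients. -/
theorem comp_partial_automorphism_aleph1Free {G : Type*} [AddCommGroup G]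
    (D₁ D₂ : AddSubgroup G) (φ : D₁ →+ G) (ψ : D₂ →+ G)
    (hφ : Function.Injective φ) (hψ : Function.Injective ψ)
    (h1 : Aleph1Free (G ⧸ D₁)) (h2 : Aleph1Free (G ⧸ φ.range))
    (h3 : Aleph1Free (G ⧸ D₂)) (h4 : Aleph1Free (G ⧸ ψ.range)) :
    Aleph1Free (G ⧸ ((D₂.comap φ).map D₁.subtype)) ∧
      Aleph1Free (G ⧸ ((φ.range.comap D₂.subtype).map ψ)) := by
  constructor
  · apply step_aleph1Free D₁.subtype D₁.subtype_injective (D₂.comap φ)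
    · rw [AddSubgroup.range_subtype]; exact h1
    · rw [← ker_mk'_comp D₂ φ]
      exact aleph1Free_of_injective (QuotientAddGroup.kerLift _)
        (QuotientAddGroup.kerLift_injective _) h3
  · apply step_aleph1Free ψ hψ (φ.range.comap D₂.subtype)
    · exact h4
    · rw [← ker_mk'_comp φ.range D₂.subtype]
      exact aleph1Free_of_injective (QuotientAddGroup.kerLift _)
        (QuotientAddGroup.kerLift_injective _) h2
end

section
/- If G is an ℵ₁-free abelian group and x ∈ G is a pure element, then G/⟨x⟩ is ℵ₁-free. -/
/-- In a free abelian group, a pure element admits a retraction to `ℤ`. -/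
lemma exists_retraction {H : Type*} [AddCommGroup H] [Module.Free ℤ H] (x : H)
    (hpure : ∀ (n : ℤ) (h : H), x = n • h → n = 1 ∨ n = -1) :
    ∃ φ : H →+ ℤ, φ x = 1 := by
  classical
  set b := Module.Free.chooseBasis ℤ H with hb
  set I : AddSubgroup ℤ :=
    { carrier := Set.range (fun φ : H →+ ℤ => φ x)
      zero_mem' := ⟨0, rfl⟩
      add_mem' := by rintro a b ⟨φ, rfl⟩ ⟨ψ, rfl⟩; exact ⟨φ + ψ, rfl⟩
      neg_mem' := by rintro a ⟨φ, rfl⟩; exact ⟨-φ, rfl⟩ } with hI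
  obtain ⟨d, hd⟩ := Int.subgroup_cyclic I
  have hdI : d ∈ I := hd ▸ AddSubgroup.subset_closure rfl
  have hdvd : ∀ i, d ∣ b.repr x i := by
    intro i
    have : (b.coord i).toAddMonoidHom x ∈ I := ⟨_, rfl⟩
    rw [hd, ← AddSubgroup.zmultiples_eq_closure] at this
    obtain ⟨n, hn⟩ := this
    exact ⟨n, by simpa [mul_comm] using hn.symm⟩
  set h' : H := b.repr.symm ((b.repr x).mapRange (fun n => n / d) (Int.zero_ediv d)) with hh'
  have hxd : x = d • h' := by
    apply b.repr.injective
    rw [hh', map_zsmul, b.repr.apply_symm_apply]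
    ext i
    simp [Finsupp.mapRange_apply, Int.mul_ediv_cancel' (hdvd i)]
  rcases hpure d h' hxd with h1 | h1
  · obtain ⟨φ, hφ⟩ := hdI
    exact ⟨φ, by simpa [h1] using hφ⟩
  · obtain ⟨φ, hφ⟩ := hdI
    exact ⟨-φ, by simp at hφ; simp [hφ, h1]⟩

/-- If `G` is ℵ₁-free and `x ∈ G` is pure, then `G/⟨x⟩` is ℵ₁-free. -/
theorem quotient_by_pure_aleph1Free {G : Type*} [AddCommGroup G]
    (hG : Aleph1Free G) (x : G) (hx : IsPureElt x) :
    Aleph1Free (G ⧸ AddSubgroup.zmultiples x) := by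
  classical
  obtain ⟨hx0, hxpure⟩ := hx
  set N := AddSubgroup.zmultiples x with hN
  intro Q hQcount
  -- the preimage of Q in G
  set H : AddSubgroup G := Q.comap (QuotientAddGroup.mk' N) with hH
  have hNsub : ∀ g ∈ N, g ∈ H := by
    intro g hg
    simp only [hH, AddSubgroup.mem_comap]
    rw [QuotientAddGroup.mk'_apply, QuotientAddGroup.eq_zero_iff g |>.2 hg]
    exact Q.zero_mem
  have hxH : x ∈ H := hNsub x (AddSubgroup.mem_zmultiples x)
  -- N is countable
  have hNcount : Countable N := by
    have : Function.Surjective (fun n : ℤ => (⟨n • x, AddSubgroup.mem_zmultiples_iff.2 ⟨n, rfl⟩⟩ : N)) := by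
      rintro ⟨g, hg⟩
      obtain ⟨n, hn⟩ := AddSubgroup.mem_zmultiples_iff.1 hg
      exact ⟨n, Subtype.ext hn⟩
    exact this.countable
  -- H is countable
  have hHcount : Countable H := by
    have hinj : Function.Injective (fun h : H => ((⟨QuotientAddGroup.mk h.1, h.2⟩ : Q),
        (⟨h.1 - (QuotientAddGroup.mk (h.1 : G) : G ⧸ N).out, by
          rw [← QuotientAddGroup.eq_zero_iff (N := N), QuotientAddGroup.mk_sub,
            QuotientAddGroup.out_eq', sub_self]⟩ : N))) := by
      rintro ⟨h1, m1⟩ ⟨h2, m2⟩ heq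
      simp only [Prod.mk.injEq, Subtype.mk.injEq] at heq
      obtain ⟨e1, e2⟩ := heq
      ext
      rw [show (QuotientAddGroup.mk h1 : G ⧸ N) = QuotientAddGroup.mk h2 from congrArg Subtype.val e1] at e2
      exact sub_left_injective e2
    exact Function.Injective.countable hinj
  have hHfree : Module.Free ℤ H := hG H hHcount
  -- x as an element of H, pure in H
  set xH : H := ⟨x, hxH⟩ with hxHdef
  have hpureH : ∀ (n : ℤ) (h : H), xH = n • h → n = 1 ∨ n = -1 := by
    intro n h heq
    apply hxpure n h.1
    have := congrArg (Subtype.val) heq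
    simpa using this
  obtain ⟨φ, hφ⟩ := exists_retraction xH hpureH
  -- the kernel of φ
  set K : AddSubgroup H := φ.ker with hK
  -- K is free: it is isomorphic to a countable subgroup of G
  have hKcount : Countable K := Subtype.countable
  set K' : AddSubgroup G := K.map H.subtype with hK'
  have hK'count : Countable K' := by
    have := (K.equivMapOfInjective H.subtype H.subtype_injective).surjective
    exact this.countable
  have hK'free : Module.Free ℤ K' := hG K' hK'count
  have hKfree : Module.Free ℤ K :=
    Module.Free.of_equiv (K.equivMapOfInjective H.subtype H.subtype_injective).symm.toIntLinearEquiv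
  -- the map H → Q
  set ρ : H →+ Q := AddMonoidHom.codRestrict ((QuotientAddGroup.mk' N).comp H.subtype) Q
    (fun h => h.2) with hρ
  have hρx : ρ xH = 0 := by
    apply Subtype.ext
    simp only [hρ, AddMonoidHom.codRestrict_apply, AddMonoidHom.comp_apply,
      QuotientAddGroup.mk'_apply]
    exact (QuotientAddGroup.eq_zero_iff x).2 (AddSubgroup.mem_zmultiples x)
  set ψ : K →+ Q := ρ.comp K.subtype with hψ
  have hinj : Function.Injective ψ := by
    rw [injective_iff_map_eq_zero]
    rintro ⟨k, hk⟩ hk0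
    have : QuotientAddGroup.mk (k.1 : G) = (0 : G ⧸ N) := congrArg Subtype.val hk0
    rw [QuotientAddGroup.eq_zero_iff] at this
    obtain ⟨n, hn⟩ := AddSubgroup.mem_zmultiples_iff.1 this
    have hkxH : k = n • xH := by
      apply Subtype.ext
      simpa using hn.symm
    have : φ k = n := by rw [hkxH, map_zsmul, hφ, smul_eq_mul, mul_one]
    rw [AddMonoidHom.mem_ker] at hk
    rw [hk] at this
    apply Subtype.ext
    simp [hkxH, ← this]
  have hsurj : Function.Surjective ψ := by
    rintro ⟨q, hq⟩
    have hgH : (q.out : G) ∈ H := by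
      simp only [hH, AddSubgroup.mem_comap, QuotientAddGroup.mk'_apply, QuotientAddGroup.out_eq']
      exact hq
    set h : H := ⟨q.out, hgH⟩ with hhdef
    set k : H := h - φ h • xH with hkdef
    have hkK : k ∈ K := by
      rw [hK, AddMonoidHom.mem_ker, hkdef, map_sub, map_zsmul, hφ, smul_eq_mul, mul_one, sub_self]
    refine ⟨⟨k, hkK⟩, ?_⟩
    apply Subtype.ext
    show ((ρ k : Q) : G ⧸ N) = q
    rw [hkdef, map_sub, map_zsmul, hρx, smul_zero, sub_zero]
    show ((QuotientAddGroup.mk' N) (h : G)) = q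
    simp [hhdef, QuotientAddGroup.out_eq']
  have e : K ≃+ Q := AddEquiv.ofBijective ψ ⟨hinj, hsurj⟩
  exact Module.Free.of_equiv e.toIntLinearEquiv
end

section
/- Test lemma for ℵ₁-free quotients: let U ⊆ G be abelian groups such that every countable subset of G is contained in a countable subgroup X of G which is free with a basis B₁ ∪ B₂ where B₁ ⊆ U and U ∩ ⟨B₂⟩ = 0. Then G/U is ℵ₁-free. -/
open Finsupp Submodule Set

theorem Submodule.exists_mem_forall_dvd {R M : Type*} [CommRing R] [IsPrincipalIdealRing R]
    [AddCommGroup M] [Module R M] (N : Submodule R M) (φ : M →ₗ[R] R) :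
    ∃ x ∈ N, ∀ y ∈ N, φ x ∣ φ y := by
  obtain ⟨x, hx, hφx⟩ := mem_map.mp (IsPrincipal.generator_mem (N.map φ))
  refine ⟨x, hx, fun y hy => ?_⟩
  rw [hφx, ← IsPrincipal.mem_iff_generator_dvd]
  exact mem_map_of_mem hy

theorem Finsupp.linearIndepOn_of_triangular {ι R : Type*} [LinearOrder ι] [Ring R]
    [NoZeroDivisors R] {x : ι → ι →₀ R} {s : Set ι} (hlt : ∀ i j, i < j → x i j = 0)
    (hdiag : ∀ i ∈ s, x i i ≠ 0) : LinearIndepOn R x s := by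
  classical
  rw [linearIndepOn_iff]
  intro l hl hl0
  by_contra hne
  have hsupp : l.support.Nonempty := Finsupp.support_nonempty_iff.mpr hne
  set n := l.support.max' hsupp
  have hn : n ∈ l.support := l.support.max'_mem hsupp
  have : l n * x n n = 0 := by
    have := DFunLike.congr_fun hl0 n
    rw [linearCombination_apply, Finsupp.sum, Finset.sum_apply', Finset.sum_eq_single n] at this
    · simpa using this
    · intro i hi hin
      simp [hlt i n (lt_of_le_of_ne (l.support.le_max' i hi) hin)]
    · exact fun h => absurd hn h
  rcases mul_eq_zero.mp this with h | h
  · exact Finsupp.mem_support_iff.mp hn h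
  · exact hdiag n (hl hn) h

theorem Finsupp.mem_supported_Iio_of_apply_eq_zero {R : Type*} [Semiring R] {n : ℕ}
    {y : ℕ →₀ R} (hy : y ∈ supported R R (Iio (n + 1))) (hyn : y n = 0) :
    y ∈ supported R R (Iio n) := by
  rw [mem_supported'] at hy ⊢
  intro m hm
  rcases (not_lt.mp (mt mem_Iio.mpr hm)).eq_or_lt with rfl | hlt
  · exact hyn
  · exact hy m (by simpa using hlt)

theorem Finsupp.mem_supported_Iio_succ_sup {R : Type*} [Semiring R] (y : ℕ →₀ R) :
    y ∈ supported R R (Iio (y.support.sup id + 1)) := by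
  rw [mem_supported]
  intro m hm
  exact Nat.lt_succ_of_le (Finset.le_sup (f := id) hm)

theorem Finsupp.free_submodule_nat {R : Type*} [CommRing R] [IsDomain R] [IsPrincipalIdealRing R]
    (N : Submodule R (ℕ →₀ R)) : Module.Free R N := by
  classical
  choose x hx hx_dvd using fun n =>
    (N ⊓ supported R R (Iio (n + 1))).exists_mem_forall_dvd (lapply n)
  simp only [lapply_apply] at hx_dvd
  set s := {n | x n n ≠ 0}
  have hlt : ∀ n m, n < m → x n m = 0 := fun n m h =>
    (mem_supported' R _).mp (hx n).2 m (by simpa using h)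
  have hli : LinearIndepOn R x s := linearIndepOn_of_triangular hlt fun _ h => h
  have hspan : ∀ n, N ⊓ supported R R (Iio n) ≤ span R (x '' s) := by
    intro n
    induction n with
    | zero =>
      intro y hy
      have hy0 : y = 0 := by simpa using hy.2
      simp [hy0]
    | succ n ih =>
      have hxn : x n ∈ span R (x '' s) := by
        by_cases h : x n n = 0
        · exact ih ⟨(hx n).1, mem_supported_Iio_of_apply_eq_zero (hx n).2 h⟩
        · exact subset_span ⟨n, h, rfl⟩
      intro y hy
      obtain ⟨c, hc⟩ := hx_dvd n y hy
      have hy' : y - c • x n ∈ N ⊓ supported R R (Iio n) :=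
        ⟨sub_mem hy.1 (smul_mem _ c (hx n).1), mem_supported_Iio_of_apply_eq_zero
          (sub_mem hy.2 (smul_mem _ c (hx n).2)) (by simp [hc, mul_comm])⟩
      simpa using add_mem (ih hy') (smul_mem _ c hxn)
  have hN : N = span R (x '' s) := le_antisymm
    (fun y hy => hspan _ ⟨hy, mem_supported_Iio_succ_sup y⟩)
    (span_le.mpr (image_subset_iff.mpr fun n _ => (hx n).1))
  rw [hN, image_eq_range]
  exact Module.Free.of_basis (Module.Basis.span hli)

theorem Module.Basis.free_submodule_of_countable {ι R M : Type*} [CommRing R] [IsDomain R]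
    [IsPrincipalIdealRing R] [AddCommGroup M] [Module R M] [Countable ι] (b : Basis ι R M)
    (N : Submodule R M) : Module.Free R N := by
  obtain ⟨e, he⟩ := exists_injective_nat ι
  let F := lmapDomain R R e ∘ₗ b.repr.toLinearMap
  have hF : Function.Injective F := (mapDomain_injective he).comp b.repr.injective
  have := free_submodule_nat (N.map F)
  exact Module.Free.of_equiv (N.equivMapOfInjective F hF).symm

theorem LinearIndependent.free_of_le_span {ι R M : Type*} [CommRing R] [IsDomain R]
    [IsPrincipalIdealRing R] [AddCommGroup M] [Module R M] [Countable ι] {v : ι → M}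
    (hv : LinearIndependent R v) {N : Submodule R M} (hN : N ≤ span R (range v)) :
    Module.Free R N :=
  have := (Module.Basis.span hv).free_submodule_of_countable (N.comap (span R (range v)).subtype)
  Module.Free.of_equiv (comapSubtypeEquivOfLe hN)

namespace QuotientAddGroup

variable {G : Type*} [AddCommGroup G] {U : AddSubgroup G}

theorem linearIndependent_mk_of_disjoint {B : Set G}
    (hli : LinearIndependent ℤ (fun b : B => (b : G)))
    (hdisj : AddSubgroup.closure B ⊓ U = ⊥) :
    LinearIndependent ℤ (fun b : B => (b : G ⧸ U)) := by
  refine hli.map (f := (mk' U).toIntLinearMap) (disjoint_def.mpr fun y hyB hyU => ?_)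
  rw [Subtype.range_coe, ← mem_toAddSubgroup, span_int_eq_addSubgroupClosure] at hyB
  have hyU' : y ∈ U := (eq_zero_iff y).mp (LinearMap.mem_ker.mp hyU)
  exact AddSubgroup.mem_bot.mp (hdisj ▸ ⟨hyB, hyU'⟩)

theorem map_closure_union_le_closure {B₁ B₂ : Set G} (hB₁ : B₁ ⊆ U) :
    (AddSubgroup.closure (B₁ ∪ B₂)).map (mk' U) ≤ AddSubgroup.closure ((↑) '' B₂) := by
  rw [AddMonoidHom.map_closure, AddSubgroup.closure_le, image_union]
  refine union_subset ?_ AddSubgroup.subset_closure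
  rintro _ ⟨b, hb, rfl⟩
  simp [(eq_zero_iff b).mpr (hB₁ hb)]

end QuotientAddGroup

/-- Test lemma: if every countable subset of `G` lies inside a countable
subgroup `X` which is free with a basis `B₁ ∪ B₂` where `B₁ ⊆ U` and
`⟨B₂⟩ ∩ U = 0`, then `G/U` is ℵ₁-free. -/
theorem test_lemma_aleph1Free {G : Type*} [AddCommGroup G] (U : AddSubgroup G)
    (h : ∀ S : Set G, S.Countable → ∃ (X : AddSubgroup G) (B₁ B₂ : Set G),
      S ⊆ X ∧ Countable X ∧ B₁ ⊆ U ∧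
      AddSubgroup.closure B₂ ⊓ U = ⊥ ∧
      AddSubgroup.closure (B₁ ∪ B₂) = X ∧
      LinearIndependent ℤ (fun b : ↥(B₁ ∪ B₂) => (b : G))) :
    Aleph1Free (G ⧸ U) := by
  intro H hH
  let lift := Function.surjInv (QuotientAddGroup.mk_surjective (s := U))
  obtain ⟨X, B₁, B₂, hSX, hX, hB₁U, hdisj, rfl, hli⟩ :=
    h (lift '' H) ((countable_coe_iff.mp hH).image lift)
  have hB₂ : Countable B₂ := ((countable_coe_iff.mp hX).mono
    (subset_union_right.trans AddSubgroup.subset_closure)).to_subtype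
  have hHX : H ≤ (AddSubgroup.closure (B₁ ∪ B₂)).map (QuotientAddGroup.mk' U) :=
    fun y hy => ⟨lift y, hSX ⟨y, hy, rfl⟩, Function.surjInv_eq _ y⟩
  -- `Module.Free ℤ H` and `Module.Free ℤ (toIntSubmodule H)` agree definitionally.
  refine (QuotientAddGroup.linearIndependent_mk_of_disjoint
    (LinearIndepOn.mono (v := id) hli subset_union_right) hdisj).free_of_le_span
    (N := AddSubgroup.toIntSubmodule H) ?_
  intro y hy
  rw [← image_eq_range, ← mem_toAddSubgroup, span_int_eq_addSubgroupClosure]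
  exact QuotientAddGroup.map_closure_union_le_closure hB₁U (hHX hy)
end

section
/- ℵ₁-freeness is preserved by unions of chains with ℵ₁-free quotients at limit stages: if (G_j)_{j<α} is an increasing continuous chain of abelian groups such that each G_j is ℵ₁-free and G_{j+1}/G_j is ℵ₁-free for all j, then G = ⋃_{j<α} G_j is ℵ₁-free. -/
theorem inf_iSup₂_lt_eq_of_monotone {α ι : Type*} [CompleteLattice α] [IsCompactlyGenerated α]
    [LinearOrder ι] {f : ι → α} (hf : Monotone f) (a : α) (j : ι) :
    a ⊓ ⨆ i < j, f i = ⨆ i < j, a ⊓ f i := by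
  rw [iSup_subtype', iSup_subtype']
  exact (hf.comp (Subtype.mono_coe _)).directed_le.inf_iSup_eq

namespace Submodule

open Set

variable {R M : Type*} [Ring R] [AddCommGroup M] [Module R M]

theorem exists_linearIndepOn_mkQ_le_sup_span (A B : Submodule R M)
    [Module.Free R (B ⧸ A.comap B.subtype)] :
    ∃ t ⊆ (B : Set M), LinearIndepOn R A.mkQ t ∧ B ≤ A ⊔ span R t := by
  set N := A.comap B.subtype
  obtain ⟨s, hs⟩ := Module.projective_lifting_property N.mkQ LinearMap.id N.mkQ_surjective
  have hN : N = LinearMap.ker (A.mkQ ∘ₗ B.subtype) := by rw [LinearMap.ker_comp, ker_mkQ]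
  set g := B.subtype ∘ₗ s
  have hg : A.mkQ ∘ₗ g = N.liftQ (A.mkQ ∘ₗ B.subtype) hN.le := by
    conv_rhs =>
      rw [← LinearMap.comp_id (N.liftQ _ _), ← hs, ← LinearMap.comp_assoc, liftQ_mkQ]
    rfl
  set b := Module.Free.chooseBasis R (B ⧸ N)
  refine ⟨range (g ∘ b), range_subset_iff.2 fun i => (s (b i)).2, ?_, fun x hx => ?_⟩
  · rw [← image_univ]
    refine LinearIndepOn.image_of_comp _ _ (linearIndepOn_univ_iff.2 ?_)
    change LinearIndependent R ((A.mkQ ∘ₗ g) ∘ b)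
    rw [hg]
    exact b.linearIndependent.map' _ (ker_liftQ_eq_bot' _ _ hN)
  · have hgx : g (N.mkQ ⟨x, hx⟩) ∈ span R (range (g ∘ b)) := by
      rw [range_comp, ← map_span, b.span_eq]
      exact mem_map_of_mem mem_top
    have hdiff : x - g (N.mkQ ⟨x, hx⟩) ∈ A := by
      change ⟨x, hx⟩ - s (N.mkQ ⟨x, hx⟩) ∈ N
      rw [← Quotient.mk_eq_zero, Quotient.mk_sub, sub_eq_zero]
      exact (LinearMap.congr_fun hs _).symm
    simpa using add_mem (mem_sup_left hdiff) (mem_sup_right hgx)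

theorem free_iSup_of_free_quotient_iSup_lt {ι : Type*} [LinearOrder ι]
    [WellFoundedLT ι] (K : ι → Submodule R M)
    (hK : ∀ i, Module.Free R (K i ⧸ (⨆ j < i, K j).comap (K i).subtype)) :
    Module.Free R ↥(⨆ i, K i) := by
  choose t ht_sub ht_ind ht_span using fun i =>
    have := hK i
    exists_linearIndepOn_mkQ_le_sup_span (⨆ j < i, K j) (K i)
  set U : ι → Set M := fun i => ⋃ j ≤ i, t j
  have hU_mono : Monotone U := fun i i' h =>
    biUnion_mono (fun j hj => le_trans hj h) fun _ _ => subset_rfl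
  have hU_sub : ∀ i, U i ⊆ (⋃ j < i, U j) ∪ t i := by
    intro i x hx
    obtain ⟨j, hji, hxj⟩ := mem_iUnion₂.1 hx
    rcases hji.lt_or_eq with hji | rfl
    · exact Or.inl (mem_biUnion hji (mem_biUnion le_rfl hxj))
    · exact Or.inr hxj
  have hU_le : ∀ i, ⋃ j < i, U j ⊆ ↑(⨆ j < i, K j) := by
    intro i
    refine iUnion₂_subset fun j hji => iUnion₂_subset fun k hkj => (ht_sub k).trans ?_
    exact SetLike.coe_subset_coe.2 <|
      le_iSup₂ (f := fun k (_ : k < i) => K k) k (hkj.trans_lt hji)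
  have hU_ind : ∀ i, LinearIndepOn R id (U i) := by
    intro i
    induction i using WellFoundedLT.induction with | _ i ih
    have hbelow : LinearIndepOn R id (⋃ j < i, U j) :=
      linearIndepOn_biUnion_of_directed
        (fun a ha b hb => ⟨max a b, max_lt ha hb, hU_mono (le_max_left a b),
          hU_mono (le_max_right a b)⟩) ih
    exact (hbelow.union_id_of_quotient (hU_le i) (ht_ind i)).mono (hU_sub i)
  have hU_span : ∀ i, K i ≤ span R (U i) := by
    intro i
    induction i using WellFoundedLT.induction with | _ i ih
    refine (ht_span i).trans (sup_le (iSup₂_le fun j hj => ?_) (span_mono ?_))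
    · exact (ih j hj).trans (span_mono (hU_mono hj.le))
    · exact subset_biUnion_of_mem (u := t) (le_refl i)
  have hspan : span R (⋃ i, U i) = ⨆ i, K i := by
    refine le_antisymm (span_le.2 (iUnion_subset fun i => iUnion₂_subset fun j _ => ?_)) ?_
    · exact (ht_sub j).trans (le_iSup K j)
    · exact iSup_le fun i => (hU_span i).trans (span_mono (subset_iUnion U i))
  have hind : LinearIndependent R ((↑) : (⋃ i, U i) → M) :=
    linearIndepOn_iUnion_of_directed hU_mono.directed_le hU_ind
  have := Module.Free.of_basis (Module.Basis.span hind)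
  rwa [Subtype.range_coe, hspan] at this

theorem free_iSup_lt_of_free_quotient_iSup_lt {ι : Type*} [LinearOrder ι]
    [WellFoundedLT ι] (K : ι → Submodule R M) (a : ι)
    (hK : ∀ i < a, Module.Free R (K i ⧸ (⨆ j < i, K j).comap (K i).subtype)) :
    Module.Free R ↥(⨆ i < a, K i) := by
  rw [iSup_subtype']
  refine free_iSup_of_free_quotient_iSup_lt _ fun i => ?_
  have hbelow : ⨆ j < i.1, K j = ⨆ (j : {j // j < a}) (_ : j < i), K j :=
    le_antisymm
      (iSup₂_le fun j hj => le_iSup₂ (f := fun (j : {j // j < a}) (_ : j < i) => K j)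
        ⟨j, hj.trans i.2⟩ hj)
      (iSup₂_le fun j hj => le_iSup₂ (f := fun j (_ : j < i.1) => K j) j.1 hj)
  have := hK i i.2
  rwa [hbelow] at this

theorem free_iSup_lt_of_chain (α : Ordinal) (K : Ordinal → Submodule R M)
    (hmono : Monotone K) (hcont : ∀ j < α, Order.IsSuccLimit j → K j = ⨆ i < j, K i)
    (h0 : 0 < α → Module.Free R (K 0))
    (hsucc : ∀ j, j + 1 < α → Module.Free R (K (j + 1) ⧸ (K j).comap (K (j + 1)).subtype)) :
    Module.Free R ↥(⨆ j < α, K j) := by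
  refine free_iSup_lt_of_free_quotient_iSup_lt K α fun j hj => ?_
  rcases Ordinal.zero_or_succ_or_isSuccLimit j with rfl | ⟨i, rfl⟩ | hlim
  · have := h0 hj
    exact Module.Free.of_equiv (quotEquivOfEqBot _ (by simp)).symm
  · rw [Order.succ_eq_add_one] at hj ⊢
    have hbelow : ⨆ k < i + 1, K k = K i :=
      le_antisymm (iSup₂_le fun k hk => hmono (Order.lt_add_one_iff.1 hk))
        (le_iSup₂ (f := fun k (_ : k < i + 1) => K k) i (Order.lt_add_one_iff.2 le_rfl))
    rw [hbelow]
    exact hsucc i hj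
  · rw [← hcont j hj hlim, comap_subtype_self]
    infer_instance

end Submodule

theorem Aleph1Free.free_of_injective {G A : Type*} [AddCommGroup G] [AddCommGroup A]
    [Module ℤ A] [Countable A] (hG : Aleph1Free G) {φ : A →+ G} (hφ : Function.Injective φ) :
    Module.Free ℤ A :=
  have := hG φ.range (Set.countable_range φ).to_subtype
  Module.Free.of_equiv (AddMonoidHom.ofInjective hφ).symm.toIntLinearEquiv

theorem Aleph1Free.free_inf {G : Type*} [AddCommGroup G] {W B : Submodule ℤ G} [Countable W]
    (hB : Aleph1Free B) : Module.Free ℤ ↥(W ⊓ B) :=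
  have := (Submodule.inclusion_injective (inf_le_left : W ⊓ B ≤ W)).countable
  hB.free_of_injective (φ := (Submodule.inclusion (inf_le_right : W ⊓ B ≤ B)).toAddMonoidHom)
    (Submodule.inclusion_injective inf_le_right)

theorem Aleph1Free.free_inf_quotient {G : Type*} [AddCommGroup G] {W A B : Submodule ℤ G}
    [Countable W] (hAB : Aleph1Free (B ⧸ A.comap B.subtype)) :
    Module.Free ℤ (↥(W ⊓ B) ⧸ (W ⊓ A).comap (W ⊓ B).subtype) := by
  have := (Submodule.inclusion_injective (inf_le_left : W ⊓ B ≤ W)).countable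
  have := ((W ⊓ A).comap (W ⊓ B).subtype).mkQ_surjective.countable
  set π := (A.comap B.subtype).mkQ ∘ₗ Submodule.inclusion (inf_le_right : W ⊓ B ≤ B)
  have hker : (W ⊓ A).comap (W ⊓ B).subtype = LinearMap.ker π := by
    ext x
    have hxW : (x : G) ∈ W := x.2.1
    simp [π, hxW]
  exact hAB.free_of_injective (φ := ((W ⊓ A).comap (W ⊓ B).subtype).liftQ π hker.le)
    (LinearMap.ker_eq_bot.1 (Submodule.ker_liftQ_eq_bot' _ _ hker))

theorem AddSubgroup.aleph1Free_of_forall_countable_le {G : Type*} [AddCommGroup G]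
    {S : AddSubgroup G}
    (h : ∀ W : Submodule ℤ G, Countable W → W ≤ S.toIntSubmodule → Module.Free ℤ W) :
    Aleph1Free S := by
  intro H _
  set e := H.equivMapOfInjective S.subtype S.subtype_injective
  have := Countable.of_equiv _ e.toEquiv
  have : Module.Free ℤ ↥(H.map S.subtype) :=
    h (H.map S.subtype).toIntSubmodule this (by rintro _ ⟨x, -, rfl⟩; exact x.2)
  exact Module.Free.of_equiv e.symm.toIntLinearEquiv

/-- ℵ₁-freeness is preserved by unions of increasing continuous chains with
ℵ₁-free quotients at successor stages. -/
theorem union_chain_aleph1Free {G : Type*} [AddCommGroup G]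
    (α : Ordinal) (f : Ordinal → AddSubgroup G)
    (hmono : ∀ i j : Ordinal, i ≤ j → f i ≤ f j)
    (hcont : ∀ j < α, Order.IsSuccLimit j → f j = ⨆ i < j, f i)
    (hfree : ∀ j < α, Aleph1Free (f j))
    (hquot : ∀ j : Ordinal, j + 1 < α →
      Aleph1Free (↥(f (j + 1)) ⧸ ((f j).addSubgroupOf (f (j + 1))))) :
    Aleph1Free ↥(⨆ j < α, f j) := by
  refine AddSubgroup.aleph1Free_of_forall_countable_le fun W _ hW => ?_
  rw [map_iSup₂] at hW
  set F : Ordinal → Submodule ℤ G := fun j => (f j).toIntSubmodule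
  have hF : Monotone F := fun i j hij => hmono i j hij
  rw [← inf_eq_left.2 hW, inf_iSup₂_lt_eq_of_monotone hF]
  -- `toIntSubmodule` changes neither carriers nor quotients, so `hfree` and `hquot` apply as is.
  refine Submodule.free_iSup_lt_of_chain α (fun j => W ⊓ F j)
    (fun i j hij => inf_le_inf_left W (hF hij)) (fun j hj hlim => ?_)
    (fun h => (hfree 0 h).free_inf) (fun j hj => ?_)
  · rw [← inf_iSup₂_lt_eq_of_monotone hF]
    simp only [F, hcont j hj hlim, map_iSup₂]
  · exact (hquot j hj).free_inf_quotient (A := F j) (B := F (j + 1))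
end

section
/- If F is a group with a linear order compatible with right multiplication (a right-orderable group) and the integral group ring ℤF has no nontrivial units, i.e., U(ℤF) = ±F, then ℤF has no zero divisors. -/
/-- For a right-orderable group `F`, if the integral group ring `ℤF` has only
trivial units `±F` (the unit conjecture), then `ℤF` has no zero divisors. -/
theorem unit_conjecture_implies_zero_divisor_conjecture
    {F : Type*} [Group F] [LinearOrder F]
    (horder : ∀ a b c : F, a ≤ b → a * c ≤ b * c)
    (hunits : ∀ u : (MonoidAlgebra ℤ F)ˣ, ∃ g : F,
      (u : MonoidAlgebra ℤ F) = MonoidAlgebra.of ℤ F g ∨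
      (u : MonoidAlgebra ℤ F) = -(MonoidAlgebra.of ℤ F g)) :
    ∀ r s : MonoidAlgebra ℤ F, r * s = 0 → r = 0 ∨ s = 0 := by
  haveI : MulRightStrictMono F := ⟨fun c a b h => by
    rcases lt_or_eq_of_le (horder a b c h.le) with h' | h'
    · exact h'
    · exact absurd (mul_right_cancel h') h.ne⟩
  intro r s h
  exact mul_eq_zero.mp h
end
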